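/- arXiv:1108.3633 — 10 statements merged into one kernel-verified Lean document; each statement's English description precedes it below -/
import Mathlib

section
/- If w is an infinite square-free word over a three-letter alphabet Σ, and w' is obtained from w by doubling each letter, then the only square factors of w' of the form uu with u a single letter are aa, bb, cc, and more generally w' contains no factor of the form vv with |v| ≥ 2. -/
lemma key_lemma (g : ℕ → Fin 3) (i n : ℕ) (v : List (Fin 3)) (hn : v.length = n)
    (h : (List.range (2 * n)).map (fun t => g (i + t)) = v ++ v) :
    ∀ t < n, g (i + t) = g (i + (n + t)) := by
  intro t ht
  have e1 := congrArg (fun l => l[t]?) h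
  have e2 := congrArg (fun l => l[n + t]?) h
  simp only [List.getElem?_map] at e1 e2
  rw [List.getElem?_range (show t < 2*n by omega)] at e1
  rw [List.getElem?_range (show n + t < 2*n by omega)] at e2
  rw [List.getElem?_append_left (by omega)] at e1
  rw [List.getElem?_append_right (by omega)] at e2
  have hh : n + t - v.length = t := by omega
  rw [hh] at e2
  rw [← e2] at e1
  simpa using e1

/-- Let w : ℕ → Fin 3 be an infinite square-free word over the three-letter
alphabet {a,b,c} = Fin 3 (no factor of w is of the form v·v with v nonempty).
Let w' be obtained from w by doubling each letter, i.e., w' n = w (n / 2).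
Then w' contains no factor of the form v·v with |v| ≥ 2 (and trivially every
single-letter square factor u·u of w' has u ∈ {a,b,c}). -/
theorem stmt_3 (w : ℕ → Fin 3)
    (hsf : ∀ (i : ℕ) (v : List (Fin 3)), v ≠ [] →
      (List.range (2 * v.length)).map (fun t => w (i + t)) ≠ v ++ v) :
    let w' : ℕ → Fin 3 := fun n => w (n / 2)
    (∀ (i : ℕ) (u : Fin 3),
      (List.range 2).map (fun t => w' (i + t)) = [u, u] →
        u = 0 ∨ u = 1 ∨ u = 2) ∧
    ∀ (i : ℕ) (v : List (Fin 3)), 2 ≤ v.length →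
      (List.range (2 * v.length)).map (fun t => w' (i + t)) ≠ v ++ v := by
  intro w'
  constructor
  · intro i u _
    fin_cases u <;> tauto
  · intro i v hv h
    set n := v.length with hn
    have key : ∀ t < n, w ((i + t) / 2) = w ((i + (n + t)) / 2) :=
      key_lemma (fun k => w (k / 2)) i n v hn.symm h
    set j := (i + 1) / 2 with hj
    rcases Nat.even_or_odd n with ⟨m, hm⟩ | ⟨m, hm⟩
    · -- n = 2m, m ≥ 1
      have hm1 : 1 ≤ m := by omega
      have claim : ∀ s < m, w (j + s) = w (j + (m + s)) := by
        intro s hs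
        have ht : 2 * (j + s) - i < n := by omega
        have hk := key (2 * (j + s) - i) ht
        have e1 : (i + (2 * (j + s) - i)) / 2 = j + s := by omega
        have e2 : (i + (n + (2 * (j + s) - i))) / 2 = j + (m + s) := by omega
        rw [e1, e2] at hk
        exact hk
      apply hsf j ((List.range m).map (fun t => w (j + t))) (by simp; omega)
      apply List.ext_getElem (by simp; omega)
      intro s hs1 hs2
      simp only [List.length_map, List.length_range] at hs1 hs2
      rw [List.getElem_map, List.getElem_range]
      by_cases hsm : s < m
      · rw [List.getElem_append_left (by simp only [List.length_map, List.length_range]; omega),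
          List.getElem_map, List.getElem_range]
      · rw [List.getElem_append_right (by simp only [List.length_map, List.length_range]; omega),
          List.getElem_map, List.getElem_range]
        simp only [List.length_map, List.length_range]
        have hsm2 : s - m < m := by omega
        have hc := claim (s - m) hsm2
        have e : j + (m + (s - m)) = j + s := by omega
        rw [e] at hc
        exact hc.symm
    · -- n = 2m+1, m ≥ 1
      have hm1 : 1 ≤ m := by omega
      have ht0 : i % 2 < n := by omega
      have ht1 : i % 2 + 1 < n := by omega
      have k0 := key (i % 2) ht0
      have k1 := key (i % 2 + 1) ht1
      have e0 : (i + i % 2) / 2 = j := by omega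
      have e1 : (i + (n + i % 2)) / 2 = j + m := by omega
      have e2 : (i + (i % 2 + 1)) / 2 = j := by omega
      have e3 : (i + (n + (i % 2 + 1))) / 2 = j + m + 1 := by omega
      rw [e0, e1] at k0
      rw [e2, e3] at k1
      have hsq : w (j + m) = w (j + m + 1) := by rw [← k0, k1]
      apply hsf (j + m) [w (j + m)] (by simp)
      simp [List.range_succ]
      exact hsq.symm
end

section
/- For every m ≥ 4, there exists a 1-uniform morphism σ : ℕ* → {a,b,c}* that is unambiguous with respect to the pattern α_m = 1·1·2·2·⋯·m·m. -/
/-!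
`σ` sends the variable `i + 1` to the `i`-th letter of Thue's square-free ternary word `w`, so
`σ(α_m)` is a prefix of the doubled word `w₀w₀w₁w₁⋯`, whose only squares have period one.
If `τ(α_m) = σ(α_m)`, every block `τ(x)τ(x)` is a square in this word, so `|τ(x)| ≤ 1`;
comparing lengths forces `|τ(x)| = 1`, hence `τ(x) = σ(x)`. The word `w` is the first
difference of the Thue–Morse sequence, and its square-freeness comes from the
overlap-freeness of Thue–Morse.
-/

section Squares

variable {α : Type*}

-- a square `uu`, resp. an overlap `auaua`, with `k = |u|`, resp. `k = |au|`, at position `i`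
def HasSquareAt (f : ℕ → α) (i k : ℕ) : Prop := ∀ j < k, f (i + j) = f (i + j + k)

def HasOverlapAt (f : ℕ → α) (i k : ℕ) : Prop := ∀ j ≤ k, f (i + j) = f (i + j + k)

def IsSquareFree (f : ℕ → α) : Prop := ∀ i k, 0 < k → ¬ HasSquareAt f i k

theorem exists_hasSquareAt_of_infix {f : ℕ → α} {n : ℕ} {u : List α}
    (h : u ++ u <:+: (List.range n).map f) : ∃ i, HasSquareAt f i u.length := by
  obtain ⟨i, hlen, hget⟩ := List.infix_iff_getElem?.1 h
  simp only [List.length_append, List.length_map, List.length_range] at hlen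
  refine ⟨i, fun j hj => ?_⟩
  have h₁ := hget j (by rw [List.length_append]; omega)
  have h₂ := hget (j + u.length) (by rw [List.length_append]; omega)
  simp only [List.getElem?_map, List.getElem?_range (by omega : j + i < n),
    List.getElem?_range (by omega : j + u.length + i < n), Option.map_some,
    Option.some_inj, List.getElem_append_left hj,
    List.getElem_append_right (by omega : u.length ≤ j + u.length), Nat.add_sub_cancel]
    at h₁ h₂
  rw [add_comm i j, h₁, add_right_comm, h₂]

theorem IsSquareFree.not_hasSquareAt_div_two {f : ℕ → α} (hf : IsSquareFree f)
    {k : ℕ} (hk : 2 ≤ k) (i : ℕ) : ¬ HasSquareAt (fun n => f (n / 2)) i k := by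
  intro h
  obtain ⟨l, rfl | rfl⟩ := Nat.even_or_odd' k
  · refine hf ((i + 1) / 2) l (by omega) fun j hj => ?_
    convert h (2 * ((i + 1) / 2 + j) - i) (by omega) using 2 <;> omega
  · -- the doubled word repeats a letter at the even position `x := i + i % 2`, hence also at
    -- the odd position `x + 2 * l + 1`, where this is a square of period one of `f`
    have h₀ := h (i % 2) (by omega)
    have h₁ := h (i % 2 + 1) (by omega)
    refine hf ((i + i % 2 + 2 * l + 1) / 2) 1 one_pos fun j hj => ?_
    obtain rfl : j = 0 := by omega
    simp only at h₀ h₁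
    rw [show (i + i % 2) / 2 = (i + (i % 2 + 1)) / 2 by omega] at h₀
    convert h₀.symm.trans h₁ using 2 <;> omega

end Squares

def thueMorse (n : ℕ) : Bool := (Nat.digits 2 n).sum.bodd

theorem thueMorse_two_mul (n : ℕ) : thueMorse (2 * n) = thueMorse n := by
  rcases n.eq_zero_or_pos with rfl | hn
  · rfl
  · simp [thueMorse, Nat.digits_def' one_lt_two (by omega : 0 < 2 * n)]

theorem thueMorse_two_mul_add_one (n : ℕ) : thueMorse (2 * n + 1) = !thueMorse n := by
  simp [thueMorse, Nat.add_div]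

theorem thueMorse_add_two_mul_eq_iff (n k : ℕ) :
    thueMorse (n + 2 * k) = thueMorse n ↔ thueMorse (n / 2 + k) = thueMorse (n / 2) := by
  obtain ⟨a, rfl | rfl⟩ := Nat.even_or_odd' n
  · rw [← mul_add, thueMorse_two_mul, thueMorse_two_mul, Nat.mul_div_cancel_left a two_pos]
  · rw [add_right_comm, ← mul_add, thueMorse_two_mul_add_one, thueMorse_two_mul_add_one,
      Bool.not_inj_iff, show (2 * a + 1) / 2 = a by omega]

theorem thueMorse_two_mul_ne_succ (n : ℕ) : thueMorse (2 * n) ≠ thueMorse (2 * n + 1) := by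
  rw [thueMorse_two_mul, thueMorse_two_mul_add_one]
  exact Bool.self_ne_not _

theorem thueMorse_four_mul_add_one (n : ℕ) : thueMorse (4 * n + 1) = thueMorse (4 * n + 2) := by
  rw [show 4 * n + 1 = 2 * (2 * n) + 1 by ring, show 4 * n + 2 = 2 * (2 * n + 1) by ring,
    thueMorse_two_mul_add_one, thueMorse_two_mul, thueMorse_two_mul, thueMorse_two_mul_add_one]

theorem HasOverlapAt.thueMorse_div_two {i k : ℕ} (h : HasOverlapAt thueMorse i (2 * k)) :
    HasOverlapAt thueMorse (i / 2) k := fun j hj => by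
  have := (thueMorse_add_two_mul_eq_iff (i + 2 * j) k).1 (h (2 * j) (by omega)).symm
  rw [show (i + 2 * j) / 2 = i / 2 + j by omega] at this
  exact this.symm

theorem thueMorse_not_hasOverlapAt_one (i : ℕ) : ¬ HasOverlapAt thueMorse i 1 := by
  intro h
  obtain ⟨a, rfl | rfl⟩ := Nat.even_or_odd' i
  · exact thueMorse_two_mul_ne_succ a (h 0 zero_le_one)
  · exact thueMorse_two_mul_ne_succ (a + 1) (by convert h 1 le_rfl using 2 <;> omega)

theorem thueMorse_not_hasOverlapAt_of_odd {k : ℕ} (hk : Odd k) (hk₃ : 3 ≤ k) (i : ℕ) :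
    ¬ HasOverlapAt thueMorse i k := by
  intro h
  have hk₂ := Nat.odd_iff.1 hk
  -- for `x := i + r`, `x` and `x + k` have opposite parity and one of them is `1 mod 4`
  obtain ⟨r, hr, hx⟩ : ∃ r ≤ 2, (i + r) % 4 = 1 ∨ (i + r + k) % 4 = 1 := by
    by_contra! H
    have := H 0; have := H 1; have := H 2
    omega
  have h₀ := h r (by omega)
  have h₁ : thueMorse (i + r + 1) = thueMorse (i + r + k + 1) := by
    convert h (r + 1) (by omega) using 2 <;> omega
  rcases hx with hx | hx
  · obtain ⟨a, ha⟩ : ∃ a, i + r = 4 * a + 1 := ⟨(i + r) / 4, by omega⟩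
    obtain ⟨b, hb⟩ : ∃ b, i + r + k = 2 * b := ⟨(i + r + k) / 2, by omega⟩
    refine thueMorse_two_mul_ne_succ b ?_
    rw [← hb, ← h₀, ← h₁, ha, thueMorse_four_mul_add_one]
  · obtain ⟨a, ha⟩ : ∃ a, i + r + k = 4 * a + 1 := ⟨(i + r + k) / 4, by omega⟩
    obtain ⟨b, hb⟩ : ∃ b, i + r = 2 * b := ⟨(i + r) / 2, by omega⟩
    refine thueMorse_two_mul_ne_succ b ?_
    rw [← hb, h₀, h₁, ha, thueMorse_four_mul_add_one]

theorem thueMorse_not_hasOverlapAt {k : ℕ} (hk : 0 < k) (i : ℕ) :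
    ¬ HasOverlapAt thueMorse i k := by
  induction k using Nat.strong_induction_on generalizing i with
  | _ k ih =>
  intro h
  obtain ⟨l, rfl | rfl⟩ := Nat.even_or_odd' k
  · exact ih l (by omega) (by omega) (i / 2) h.thueMorse_div_two
  · rcases l.eq_zero_or_pos with rfl | hl
    · exact thueMorse_not_hasOverlapAt_one i h
    · exact thueMorse_not_hasOverlapAt_of_odd (odd_two_mul_add_one l) (by omega) i h

-- Thue's square-free ternary word: the first difference of the Thue–Morse sequence
def thueWord (n : ℕ) : Fin 3 :=
  match thueMorse n, thueMorse (n + 1) with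
  | false, true => 1
  | true, false => 2
  | _, _ => 0

theorem thueMorse_eq_iff_succ_of_thueWord_eq {a b : ℕ} (h : thueWord a = thueWord b) :
    thueMorse a = thueMorse b ↔ thueMorse (a + 1) = thueMorse (b + 1) := by
  unfold thueWord at h
  cases ha : thueMorse a <;> cases ha' : thueMorse (a + 1) <;> cases hb : thueMorse b <;>
    cases hb' : thueMorse (b + 1) <;> simp_all

theorem thueMorse_succ_eq_of_thueWord_eq {a b : ℕ} (h : thueWord a = thueWord b)
    (hne : thueMorse a ≠ thueMorse b) : thueMorse (a + 1) = thueMorse a := by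
  unfold thueWord at h
  cases ha : thueMorse a <;> cases ha' : thueMorse (a + 1) <;> cases hb : thueMorse b <;>
    cases hb' : thueMorse (b + 1) <;> simp_all

theorem isSquareFree_thueWord : IsSquareFree thueWord := by
  intro i k hk h
  -- agreement of `thueMorse` at distance `k` propagates along the square
  have hprop : ∀ j ≤ k, thueMorse (i + j) = thueMorse (i + j + k) ↔
      thueMorse i = thueMorse (i + k) := by
    intro j hj
    induction j with
    | zero => rfl
    | succ j ih =>
      rw [← ih (by omega), thueMorse_eq_iff_succ_of_thueWord_eq (h j (by omega))]
      simp only [← add_assoc, add_right_comm _ k 1]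
  by_cases h₀ : thueMorse i = thueMorse (i + k)
  · exact thueMorse_not_hasOverlapAt hk i fun j hj => (hprop j hj).2 h₀
  · have e₀ := thueMorse_succ_eq_of_thueWord_eq (h 0 hk) h₀
    obtain rfl | hk₂ : k = 1 ∨ 2 ≤ k := by omega
    · exact h₀ e₀.symm
    · have e₁ := thueMorse_succ_eq_of_thueWord_eq (h 1 hk₂) fun h₁ =>
        h₀ ((hprop 1 (by omega)).1 h₁)
      refine thueMorse_not_hasOverlapAt_one i fun j hj => ?_
      interval_cases j
      · exact e₀.symm
      · exact e₁.symm

section Lists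

variable {ι A : Type*}

theorem List.flatMap_range_pair_eq_map (m : ℕ) (c : ℕ → A) :
    (List.range m).flatMap (fun i => [c i, c i]) = (List.range (2 * m)).map fun n => c (n / 2) := by
  induction m with
  | zero => rfl
  | succ m ih =>
    rw [List.range_succ, List.flatMap_append, ih, show 2 * (m + 1) = 2 * m + 1 + 1 by ring,
      List.range_succ, List.range_succ]
    have h₀ : 2 * m / 2 = m := by omega
    have h₁ : (2 * m + 1) / 2 = m := by omega
    simp [h₀, h₁]

theorem List.forall_eq_of_flatMap_eq {l : List ι} {F G : ι → List A}
    (hlen : ∀ i ∈ l, (F i).length = (G i).length) (h : l.flatMap F = l.flatMap G) :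
    ∀ i ∈ l, F i = G i := by
  induction l with
  | nil => simp
  | cons a l ih =>
    simp only [List.flatMap_cons] at h
    obtain ⟨ha, hl⟩ := List.append_inj h (hlen a List.mem_cons_self)
    simpa [ha] using ih (fun i hi => hlen i (List.mem_cons_of_mem a hi)) hl

theorem eq_singleton_of_flatMap_append_self_eq {l : List ι} {F : ι → List A} {c : ι → A}
    (hsq : ∀ u : List A, 2 ≤ u.length → ¬ u ++ u <:+: l.flatMap fun i => [c i, c i])
    (h : (l.flatMap fun i => F i ++ F i) = l.flatMap fun i => [c i, c i]) :
    ∀ i ∈ l, F i = [c i] := by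
  have hle : ∀ i ∈ l, (F i).length ≤ 1 := fun i hi => by
    by_contra! hi'
    exact hsq (F i) hi' (h ▸ List.infix_of_mem_flatten (List.mem_map_of_mem hi))
  have hlen : ∀ i ∈ l, (F i ++ F i).length = [c i, c i].length := by
    by_contra! hne
    obtain ⟨i, hi, hne⟩ := hne
    have := congrArg List.length h
    simp only [List.length_flatMap] at this
    refine this.not_lt (List.sum_lt_sum _ _ (fun j hj => ?_) ⟨i, hi, ?_⟩) <;>
      simp only [List.length_append, List.length_cons, List.length_nil] at hne ⊢
    · have := hle j hj; omega
    · have := hle i hi; omega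
  intro i hi
  obtain ⟨d, hd⟩ : ∃ d, F i = [d] :=
    List.length_eq_one_iff.1 (by
      have := hlen i hi
      simp only [List.length_append, List.length_cons, List.length_nil] at this
      omega)
  simpa [hd] using List.forall_eq_of_flatMap_eq hlen h i hi

theorem IsSquareFree.not_append_self_infix_flatMap_range {f : ℕ → A} (hf : IsSquareFree f)
    (m : ℕ) {u : List A} (hu : 2 ≤ u.length) :
    ¬ u ++ u <:+: (List.range m).flatMap fun i => [f i, f i] := by
  rw [List.flatMap_range_pair_eq_map]
  intro hinf
  obtain ⟨i, hi⟩ := exists_hasSquareAt_of_infix hinf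
  exact hf.not_hasSquareAt_div_two hu i hi

end Lists

theorem stmt_4_general (m : ℕ) :
    let α : List ℕ := (List.range m).flatMap (fun i => [i + 1, i + 1])
    ∃ σ : ℕ → List (Fin 3), (∀ x, (σ x).length = 1) ∧
      ∀ τ : ℕ → List (Fin 3),
        α.flatMap τ = α.flatMap σ → ∀ x ∈ α, τ x = σ x := by
  intro α
  refine ⟨fun x => [thueWord (x - 1)], fun _ => rfl, fun τ hτ x hx => ?_⟩
  obtain ⟨i, hi, rfl⟩ : ∃ i ∈ List.range m, x = i + 1 := by simpa [α, eq_comm] using hx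
  have hblocks : ((List.range m).flatMap fun i => τ (i + 1) ++ τ (i + 1)) =
      (List.range m).flatMap fun i => [thueWord i, thueWord i] := by
    simpa [α, List.flatMap_assoc] using hτ
  simpa using eq_singleton_of_flatMap_append_self_eq
    (fun _ hu => isSquareFree_thueWord.not_append_self_infix_flatMap_range m hu) hblocks i hi

/-- For every m ≥ 4 there is a 1-uniform morphism σ : ℕ* → {a,b,c}*
(target alphabet `Fin 3`) that is unambiguous with respect to the pattern
α_m = 1·1·2·2·⋯·m·m. -/
theorem stmt_4 (m : ℕ) (hm : 4 ≤ m) :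
    let α : List ℕ := (List.range m).flatMap (fun i => [i + 1, i + 1])
    ∃ σ : ℕ → List (Fin 3), (∀ x, (σ x).length = 1) ∧
      ∀ τ : ℕ → List (Fin 3),
        α.flatMap τ = α.flatMap σ → ∀ x ∈ α, τ x = σ x :=
  stmt_4_general m
end

section
/- If a pattern α ∈ ℕ* is a fixed point of a nontrivial morphism, then for every alphabet Σ, every nonerasing morphism σ : ℕ* → Σ* is ambiguous with respect to α. -/
private lemma len_le_flatMap (φ : ℕ → List ℕ) :
    ∀ l : List ℕ, (∀ x ∈ l, φ x ≠ []) → l.length ≤ (l.flatMap φ).length := by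
  intro l
  induction l with
  | nil => simp
  | cons a t ih =>
    intro h
    have ha : φ a ≠ [] := h a (by simp)
    have h1 : 1 ≤ (φ a).length := List.length_pos_iff.mpr ha
    have := ih (fun x hx => h x (by simp [hx]))
    simp only [List.flatMap_cons, List.length_append, List.length_cons]
    omega

private lemma fix_nonerasing (φ : ℕ → List ℕ) :
    ∀ l : List ℕ, l.flatMap φ = l → (∀ x ∈ l, φ x ≠ []) → ∀ x ∈ l, φ x = [x] := by
  intro l
  induction l with
  | nil => simp
  | cons a t ih =>
    intro hfix h
    have ha : φ a ≠ [] := h a (by simp)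
    obtain ⟨b, r, hb⟩ : ∃ b r, φ a = b :: r := by
      cases hφa : φ a with
      | nil => exact absurd hφa ha
      | cons b r => exact ⟨b, r, rfl⟩
    rw [List.flatMap_cons, hb] at hfix
    simp only [List.cons_append, List.cons.injEq] at hfix
    obtain ⟨hba, hrest⟩ := hfix
    have hle : t.length ≤ (t.flatMap φ).length :=
      len_le_flatMap φ t (fun x hx => h x (by simp [hx]))
    have hlen : r.length + (t.flatMap φ).length = t.length := by
      have := congrArg List.length hrest
      simpa using this
    have hr : r = [] := by
      have : r.length = 0 := by omega
      exact List.length_eq_zero_iff.mp this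
    subst hr
    simp only [List.nil_append] at hrest
    intro x hx
    rcases List.mem_cons.mp hx with h1 | h2
    · subst h1; rw [hb, hba]
    · exact ih hrest (fun y hy => h y (by simp [hy])) x h2

/-- If a pattern α ∈ ℕ* is a fixed point of a nontrivial morphism
(some φ : ℕ* → ℕ* with φ(α) = α and φ(x) ≠ x for some variable x in α),
then for every alphabet Σ, every nonerasing morphism σ : ℕ* → Σ*
is ambiguous with respect to α. -/
theorem stmt_5 (α : List ℕ)
    (hfp : ∃ φ : ℕ → List ℕ, α.flatMap φ = α ∧ ∃ x ∈ α, φ x ≠ [x])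
    (S : Type*) (σ : ℕ → List S) (hne : ∀ x, σ x ≠ []) :
    ∃ τ : ℕ → List S,
      α.flatMap τ = α.flatMap σ ∧ ∃ x ∈ α, τ x ≠ σ x := by
  obtain ⟨φ, hfix, x₀, hx₀, hx₀ne⟩ := hfp
  by_cases herase : ∃ x ∈ α, φ x = []
  · obtain ⟨x, hx, hxe⟩ := herase
    refine ⟨fun n => (φ n).flatMap σ, ?_, x, hx, ?_⟩
    · rw [← List.flatMap_assoc, hfix]
    · simp only [hxe, List.flatMap_nil]
      exact fun h => hne x h.symm
  · push_neg at herase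
    exact absurd (fix_nonerasing φ α hfix herase x₀ hx₀) hx₀ne
end

section
/- Let α ∈ ℕ⁺ be a pattern and suppose there exists a variable i occurring in α such that ε ∉ L_i and for every k ∈ L_i, R_k = {i} (i.e., i is not the first symbol of α, and every variable immediately preceding some occurrence of i is always immediately followed by i and is not the last symbol of α). Then α is a fixed point of a nontrivial morphism. -/
/-!
The morphism sends `i` to `ε`, every `k ∈ L_i` to `k·i`, and fixes all other variables. Reading
`α` from the left, a factor `k·i` is mapped to `k·i·ε`, and any other letter `x ≠ i` is not
followed by `i` and is mapped to itself, so `α` is reproduced block by block. The hypothesis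
`R_k = {i}` guarantees that after each `k ∈ L_i` comes an `i` and that `i·i` is not a factor
(otherwise every successor of `i` would be `i` and `α` would end in `i ∈ L_i`), so the scan
never starts a block at an `i`.
-/

namespace List

variable {β : Type*}

theorem pair_infix_of_suffix {x y : β} {t l : List β} (h : x :: y :: t <:+ l) : [x, y] <:+: l :=
  (prefix_append [x, y] t).isInfix.trans h.isInfix

theorem head?_ne_of_suffix_of_not_pair_infix {x y : β} {t l : List β} (h : x :: t <:+ l)
    (hxy : ¬ [x, y] <:+: l) : t.head? ≠ some y := by
  intro ht
  obtain ⟨t', rfl⟩ := head?_eq_some_iff.mp ht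
  exact hxy (pair_infix_of_suffix h)

theorem getLast?_eq_of_forall_pair_infix {x : β} :
    ∀ {l : List β}, x ∈ l → (∀ y, [x, y] <:+: l → y = x) → l.getLast? = some x
  | [a], hx, _ => by simp_all
  | a :: b :: t, hx, h => by
    have hbt : ∀ y, [x, y] <:+: b :: t → y = x :=
      fun y hy => h y (hy.trans (suffix_cons a _).isInfix)
    have hx' : x ∈ b :: t := by
      rcases mem_cons.mp hx with rfl | hx'
      · exact h b (pair_infix_of_suffix (suffix_refl _)) ▸ mem_cons_self
      · exact hx'
    simpa using getLast?_eq_of_forall_pair_infix hx' hbt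

end List

section

variable {β : Type*} [DecidableEq β] (α : List β) (i : β)

def absorbLeft (x : β) : List β :=
  if x = i then [] else if [x, i] <:+: α then [x, i] else [x]

variable {α i}

theorem absorbLeft_self : absorbLeft α i i = [] := if_pos rfl

theorem absorbLeft_of_pair_infix {x : β} (hx : x ≠ i) (h : [x, i] <:+: α) :
    absorbLeft α i x = [x, i] := by
  simp [absorbLeft, hx, h]

theorem absorbLeft_of_not_pair_infix {x : β} (hx : x ≠ i) (h : ¬ [x, i] <:+: α) :
    absorbLeft α i x = [x] := by
  simp [absorbLeft, hx, h]

theorem flatMap_absorbLeft_of_suffix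
    (hR : ∀ k, [k, i] <:+: α → (∀ y, [k, y] <:+: α → y = i) ∧ α.getLast? ≠ some k) :
    ∀ {l : List β}, l <:+ α → l.head? ≠ some i → l.flatMap (absorbLeft α i) = l
  | [], _, _ => rfl
  | [x], hl, hx => by
    have hxi : x ≠ i := by simpa using hx
    have hnot : ¬ [x, i] <:+: α :=
      fun h => (hR x h).2 (List.singleton_suffix_iff_getLast?_eq_some.mp hl)
    simp [absorbLeft_of_not_pair_infix hxi hnot]
  | x :: y :: t, hl, hx => by
    have hxi : x ≠ i := by simpa using hx
    have hyt : y :: t <:+ α := (List.suffix_cons x _).trans hl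
    by_cases hinf : [x, i] <:+: α
    · have hyi : y = i := (hR x hinf).1 y (List.pair_infix_of_suffix hl)
      subst y
      have hii : ¬ [i, i] <:+: α := fun h =>
        (hR i h).2 (List.getLast?_eq_of_forall_pair_infix (h.subset (by simp)) (hR i h).1)
      have ht := flatMap_absorbLeft_of_suffix hR ((List.suffix_cons i t).trans hyt)
        (List.head?_ne_of_suffix_of_not_pair_infix hyt hii)
      simp [absorbLeft_of_pair_infix hxi hinf, absorbLeft_self, ht]
    · have hyt' := flatMap_absorbLeft_of_suffix hR hyt
        (List.head?_ne_of_suffix_of_not_pair_infix hl hinf)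
      rw [List.flatMap_cons, hyt', absorbLeft_of_not_pair_infix hxi hinf]
      rfl

end

theorem stmt_6_general (α : List ℕ) (i : ℕ) (hi : i ∈ α)
    (hL : α.head? ≠ some i)
    (hR : ∀ k : ℕ, [k, i] <:+: α →
      (∀ y : ℕ, [k, y] <:+: α → y = i) ∧ α.getLast? ≠ some k) :
    ∃ φ : ℕ → List ℕ, α.flatMap φ = α ∧ ∃ x ∈ α, φ x ≠ [x] :=
  ⟨absorbLeft α i, flatMap_absorbLeft_of_suffix hR (List.suffix_refl α) hL,
    i, hi, by simp [absorbLeft_self]⟩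

/-- Let α ∈ ℕ⁺ and let i be a variable occurring in α such that ε ∉ L_i
(α does not begin with i) and, for every k ∈ L_i (i.e., k·i is a factor
of α), R_k = {i} (every factor k·y of α has y = i, and α does not end
with k). Then α is a fixed point of a nontrivial morphism. -/
theorem stmt_6 (α : List ℕ) (hα : α ≠ []) (i : ℕ) (hi : i ∈ α)
    (hL : α.head? ≠ some i)
    (hR : ∀ k : ℕ, [k, i] <:+: α →
      (∀ y : ℕ, [k, y] <:+: α → y = i) ∧ α.getLast? ≠ some k) :
    ∃ φ : ℕ → List ℕ, α.flatMap φ = α ∧ ∃ x ∈ α, φ x ≠ [x] :=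
  stmt_6_general α i hi hL hR
end

section
/- Let α ∈ ℕ⁺ be a pattern and suppose there exists a variable i in α such that ε ∉ R_i and for every k ∈ R_i, L_k = {i}. Then α is a fixed point of a nontrivial morphism. -/
/-- Let α ∈ ℕ⁺ and let i be a variable occurring in α such that ε ∉ R_i
(α does not end with i) and, for every k ∈ R_i (i.e., i·k is a factor
of α), L_k = {i} (every factor y·k of α has y = i, and α does not begin
with k). Then α is a fixed point of a nontrivial morphism. -/
theorem stmt_7 (α : List ℕ) (hα : α ≠ []) (i : ℕ) (hi : i ∈ α)
    (hR : α.getLast? ≠ some i)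
    (hL : ∀ k : ℕ, [i, k] <:+: α →
      (∀ y : ℕ, [y, k] <:+: α → y = i) ∧ α.head? ≠ some k) :
    ∃ φ : ℕ → List ℕ, α.flatMap φ = α ∧ ∃ x ∈ α, φ x ≠ [x] := by
  classical
  -- i is not in R_i
  have hii : ¬ [i, i] <:+: α := by
    intro h
    obtain ⟨h1, h2⟩ := hL i h
    -- first occurrence of i argument
    have key : ∀ l : List ℕ, l <:+: α → l.head? ≠ some i → i ∉ l := by
      intro l
      induction l with
      | nil => intro _ _ h; simp at h
      | cons x t ih =>
        intro hinf hhead hmem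
        have hxi : x ≠ i := by simpa using hhead
        have htinf : t <:+: α := (List.suffix_cons x t).isInfix.trans hinf
        have hth : t.head? ≠ some i := by
          intro hh
          cases t with
          | nil => simp at hh
          | cons y t' =>
            have hy : y = i := by simpa using hh
            have hxy : [x, y] <:+: α := List.IsInfix.trans ⟨[], t', rfl⟩ hinf
            exact hxi (h1 x (hy ▸ hxy))
        rcases List.mem_cons.mp hmem with h | h
        · exact hxi h.symm
        · exact ih htinf hth h
    exact key α (List.infix_refl α) h2 hi
  set φ : ℕ → List ℕ := fun x =>
    if x = i then [] else if [i, x] <:+: α then [i, x] else [x] with hφ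
  have φi : φ i = [] := by simp [hφ]
  have φR : ∀ k, [i, k] <:+: α → φ k = [i, k] := by
    intro k hk
    have hki : k ≠ i := by rintro rfl; exact hii hk
    simp [hφ, hki, hk]
  have φo : ∀ x, x ≠ i → ¬ [i, x] <:+: α → φ x = [x] := by
    intro x hx1 hx2
    simp [hφ, hx1, hx2]
  have main : ∀ n (s : List ℕ), s.length ≤ n → s <:+ α →
      (∀ k, s.head? = some k → ¬ [i, k] <:+: α) → s.flatMap φ = s := by
    intro n
    induction n with
    | zero =>
      intro s hlen _ _
      have : s = [] := List.length_eq_zero_iff.mp (Nat.le_zero.mp hlen)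
      simp [this]
    | succ n ih =>
      intro s hlen hsuf hhead
      match s with
      | [] => simp
      | [x] =>
        have hlast : α.getLast? = some x := by
          obtain ⟨l, hl⟩ := hsuf
          rw [← hl]
          simp [List.getLast?_concat]
        have hxi : x ≠ i := by rintro rfl; exact hR hlast
        have hnx : ¬ [i, x] <:+: α := hhead x rfl
        simp [φo x hxi hnx]
      | x :: k :: t =>
        have htsuf : t <:+ α := ((List.suffix_cons k t).trans
          (List.suffix_cons x (k :: t))).trans hsuf
        have hktsuf : k :: t <:+ α := (List.suffix_cons x (k :: t)).trans hsuf
        have hxk : [x, k] <:+: α := List.IsInfix.trans ⟨[], t, rfl⟩ hsuf.isInfix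
        by_cases hx : x = i
        · have hik : [i, k] <:+: α := hx ▸ hxk
          have hthead : ∀ k', t.head? = some k' → ¬ [i, k'] <:+: α := by
            intro k' hk' hik'
            cases t with
            | nil => simp at hk'
            | cons y t' =>
              have hy : y = k' := by simpa using hk'
              have hkk' : [k, y] <:+: α :=
                List.IsInfix.trans ⟨[], t', rfl⟩ hktsuf.isInfix
              have hki : k = i := (hL k' hik').1 k (hy ▸ hkk')
              exact hii (hki ▸ hik)
          have ht : t.flatMap φ = t := by
            refine ih t ?_ htsuf hthead
            have : (x :: k :: t).length ≤ n + 1 := hlen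
            simp only [List.length_cons] at this ⊢; omega
          simp [List.flatMap_cons, hx, φi, φR k hik, ht]
        · have hnx : ¬ [i, x] <:+: α := hhead x rfl
          have hkt : (k :: t).flatMap φ = k :: t := by
            refine ih (k :: t) ?_ hktsuf ?_
            · have : (x :: k :: t).length ≤ n + 1 := hlen
              simp only [List.length_cons] at this ⊢; omega
            · intro k' hk' hik'
              have hk'' : k' = k := by simpa using hk'.symm
              subst hk''
              exact hx ((hL k' hik').1 x hxk)
          rw [List.flatMap_cons, φo x hx hnx, hkt]
          rfl
  refine ⟨φ, ?_, i, hi, by simp [φi]⟩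
  refine main α.length α le_rfl (List.suffix_refl α) ?_
  intro k hk hik
  exact (hL k hik).2 hk
end

section
/- Let α ∈ ℕ⁺ be a pattern and let i and x' be two distinct variables. If α can be written as α₁·i·x'·α₂·i·x'·⋯·α_m·i·x'·α_{m+1} where i and x' each occur exactly m times in α (so all occurrences of i are immediately followed by x' and all occurrences of x' are immediately preceded by i), then α is a fixed point of a nontrivial morphism. -/
private theorem aux8 (i x' : ℕ) (hne : i ≠ x') :
    ∀ l : List ℕ, l.getLast? ≠ some i → l.head? ≠ some x' →
    (∀ y : ℕ, [i, y] <:+: l → y = x') → (∀ y : ℕ, [y, x'] <:+: l → y = i) →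
    l.flatMap (fun z => if z = i then [i, x'] else if z = x' then [] else [z]) = l
  | [], _, _, _, _ => by simp
  | [a], hlast, hhead, _, _ => by
      have ha1 : a ≠ i := by intro h; exact hlast (by simp [h])
      have ha2 : a ≠ x' := by intro h; exact hhead (by simp [h])
      simp [ha1, ha2]
  | a :: b :: t, hlast, hhead, hRi, hLx => by
      have ha2 : a ≠ x' := by intro h; exact hhead (by simp [h])
      by_cases hai : a = i
      · have hb : b = x' := hRi b ⟨[], t, by simp [hai]⟩
        have htinf : t <:+: a :: b :: t :=
          ((t.suffix_cons b).trans (List.suffix_cons a (b :: t))).isInfix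
        have hlast' : t.getLast? ≠ some i := by
          cases t with
          | nil => simp
          | cons c s =>
            rw [List.getLast?_cons_cons, List.getLast?_cons_cons] at hlast
            exact hlast
        have hhead' : t.head? ≠ some x' := by
          cases t with
          | nil => simp
          | cons c s =>
            intro h
            simp at h
            exact hne (hLx x' ⟨[a], s, by simp [hb, h]⟩).symm
        have ih := aux8 i x' hne t hlast' hhead'
          (fun y hy => hRi y (hy.trans htinf))
          (fun y hy => hLx y (hy.trans htinf))
        have hbi : b ≠ i := by rw [hb]; exact fun h => hne h.symm
        rw [List.flatMap_cons, List.flatMap_cons, ih, if_pos hai,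
          if_neg hbi, if_pos hb]
        simp [hai, hb]
      · have hb : b ≠ x' := by
          intro h; subst h
          exact hai (hLx a ⟨[], t, by simp⟩)
        have htinf : (b :: t) <:+: a :: b :: t :=
          (List.suffix_cons a (b :: t)).isInfix
        have hlast' : (b :: t).getLast? ≠ some i := by
          rw [List.getLast?_cons_cons] at hlast; exact hlast
        have hhead' : (b :: t).head? ≠ some x' := by simp [hb]
        have ih := aux8 i x' hne (b :: t) hlast' hhead'
          (fun y hy => hRi y (hy.trans htinf))
          (fun y hy => hLx y (hy.trans htinf))
        rw [List.flatMap_cons, ih, if_neg hai, if_neg ha2]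
        simp

/-- Let α ∈ ℕ⁺ contain two distinct variables i and x', each occurring
exactly m ≥ 1 times, such that every occurrence of i is immediately
followed by x' and every occurrence of x' is immediately preceded by i
(i.e., R_i = {x'} and L_{x'} = {i}: α does not end with i, does not begin
with x', every factor i·y has y = x', and every factor y·x' has y = i).
Then α is a fixed point of a nontrivial morphism. -/
theorem stmt_8 (α : List ℕ) (hα : α ≠ []) (i x' : ℕ) (hne : i ≠ x')
    (m : ℕ) (hm : 1 ≤ m) (hci : α.count i = m) (hcx : α.count x' = m)
    (hlast : α.getLast? ≠ some i) (hhead : α.head? ≠ some x')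
    (hRi : ∀ y : ℕ, [i, y] <:+: α → y = x')
    (hLx : ∀ y : ℕ, [y, x'] <:+: α → y = i) :
    ∃ φ : ℕ → List ℕ, α.flatMap φ = α ∧ ∃ x ∈ α, φ x ≠ [x] := by
  refine ⟨fun z => if z = i then [i, x'] else if z = x' then [] else [z],
    aux8 i x' hne α hlast hhead hRi hLx, x', ?_, ?_⟩
  · have : α.count x' ≠ 0 := by omega
    exact List.count_pos_iff.mp (Nat.pos_of_ne_zero this)
  · simp [hne.symm]
end

section
/- For i ≠ j, if σ_{i,j}(α) is a fixed point of a nontrivial morphism, then σ_{i,j} is ambiguous with respect to α. -/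
/-- The witness is `φ ∘ σ`: it agrees with `σ` on `w` because `φ` fixes `σ(w)`, and it differs from
`σ` at a variable whose (single) letter `φ` moves. -/
theorem List.exists_flatMap_eq_and_ne_of_flatMap_fixed {α β : Type*} (w : List α)
    (σ : α → List β) (hσ : ∀ x ∈ w, ∃ b, σ x = [b]) (φ : β → List β)
    (hφ : (w.flatMap σ).flatMap φ = w.flatMap σ) (hmoved : ∃ a ∈ w.flatMap σ, φ a ≠ [a]) :
    ∃ τ : α → List β, w.flatMap τ = w.flatMap σ ∧ ∃ x ∈ w, τ x ≠ σ x := by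
  obtain ⟨a, ha, hφa⟩ := hmoved
  obtain ⟨x, hx, hax⟩ := List.mem_flatMap.1 ha
  obtain ⟨b, hb⟩ := hσ x hx
  rw [hb, List.mem_singleton] at hax
  subst hax
  refine ⟨fun y => (σ y).flatMap φ, by rw [← hφ, List.flatMap_assoc], x, hx, ?_⟩
  simpa [hb] using hφa

theorem stmt_9_general (S : Type*) (σ : ℕ → S)
    (i j : ℕ) (α : List ℕ)
    (σij : ℕ → List S) (hσij : σij = fun x => if x = j then [σ i] else [σ x])
    (hfp : ∃ φ : S → List S, (α.flatMap σij).flatMap φ = α.flatMap σij ∧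
      ∃ a ∈ α.flatMap σij, φ a ≠ [a]) :
    ∃ τ : ℕ → List S,
      α.flatMap τ = α.flatMap σij ∧ ∃ x ∈ α, τ x ≠ σij x := by
  obtain ⟨φ, hφ, hmoved⟩ := hfp
  have hletter : ∀ x ∈ α, ∃ b, σij x = [b] := fun x _ => by
    simp only [hσij]
    split_ifs <;> exact ⟨_, rfl⟩
  exact List.exists_flatMap_eq_and_ne_of_flatMap_fixed α σij hletter φ hφ hmoved

/-- Let Σ be an infinite alphabet, σ : ℕ → S a renaming (injective,
1-uniform), and for i ≠ j let σ_{i,j} map j to σ(i) and every other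
variable x to σ(x). If σ_{i,j}(α) is a fixed point of a nontrivial
morphism, then σ_{i,j} is ambiguous with respect to α. -/
theorem stmt_9 (S : Type*) [Infinite S] (σ : ℕ → S)
    (hinj : Function.Injective σ) (i j : ℕ) (hij : i ≠ j) (α : List ℕ)
    (σij : ℕ → List S) (hσij : σij = fun x => if x = j then [σ i] else [σ x])
    (hfp : ∃ φ : S → List S, (α.flatMap σij).flatMap φ = α.flatMap σij ∧
      ∃ a ∈ α.flatMap σij, φ a ≠ [a]) :
    ∃ τ : ℕ → List S,
      α.flatMap τ = α.flatMap σij ∧ ∃ x ∈ α, τ x ≠ σij x :=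
  stmt_9_general S σ i j α σij hσij hfp
end

section
/- Let α ∈ ℕ⁺ be a pattern with more than 6 distinct variables in which every variable occurs exactly twice. Then there exist distinct variables i, j in α such that (1) no variable k satisfies {i,j} ⊆ L_k or {i,j} ⊆ R_k, and (2) α cannot be written as α₁·i·j·α₂·j·i·α₃. -/
/-! Each variable occurs twice, so it has at most two left and at most two right neighbours.
Hence at most `2n` ordered pairs of distinct variables share a right neighbour, at most `2n`
share a left neighbour, and a pair `(i, j)` with both `i·j` and `j·i` factors of `α` occupies one
of the `2n - 1` adjacent positions of `α`. These `6n - 1` bad pairs are fewer than the `n(n - 1)`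
ordered pairs of distinct variables once `n ≥ 7`. -/

namespace List

variable {ι : Type*}

theorem infix_pair_iff_mem_consecutivePairs {a b : ι} {l : List ι} :
    [a, b] <:+: l ↔ (a, b) ∈ l.consecutivePairs := by
  induction l with
  | nil => simp
  | cons c l ih =>
    cases l with
    | nil => exact iff_of_false (fun h => by simpa using h.length_le) (by simp [consecutivePairs])
    | cons d l => simp [infix_cons_iff, ih, consecutivePairs, and_comm]

theorem pair_infix_reverse_iff {a b : ι} {l : List ι} :
    [a, b] <:+: l.reverse ↔ [b, a] <:+: l := by
  rw [← reverse_infix]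
  simp

variable [DecidableEq ι]

theorem length_eq_two_mul_card_toFinset {l : List ι} (hl : ∀ x ∈ l, l.count x = 2) :
    l.length = 2 * l.toFinset.card := by
  rw [← sum_map_count_dedup_eq_length, card_toFinset,
    map_congr_left fun x hx => hl x (mem_dedup.1 hx)]
  simp [mul_comm]

theorem card_filter_infix_pair_le (l : List ι) (s : Finset (ι × ι)) :
    (s.filter fun p => [p.1, p.2] <:+: l).card ≤ l.length - 1 := by
  calc (s.filter fun p => [p.1, p.2] <:+: l).card ≤ l.consecutivePairs.toFinset.card :=
        Finset.card_le_card fun p hp =>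
          mem_toFinset.2 (infix_pair_iff_mem_consecutivePairs.1 (Finset.mem_filter.1 hp).2)
    _ ≤ l.consecutivePairs.length := toFinset_card_le _
    _ = l.length - 1 := by simp [consecutivePairs]

theorem card_filter_infix_pair_left_le (l : List ι) (s : Finset ι) (k : ι) :
    (s.filter fun a => [a, k] <:+: l).card ≤ l.count k := by
  set P := l.consecutivePairs.filter fun p => p.2 == k
  calc (s.filter fun a => [a, k] <:+: l).card ≤ (P.map Prod.fst).toFinset.card := by
        refine Finset.card_le_card fun a ha => mem_toFinset.2 (mem_map.2 ⟨(a, k), ?_, rfl⟩)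
        exact mem_filter.2
          ⟨infix_pair_iff_mem_consecutivePairs.1 (Finset.mem_filter.1 ha).2, by simp⟩
    _ ≤ P.length := (toFinset_card_le _).trans (length_map _).le
    _ = (l.consecutivePairs.map Prod.snd).count k := by
        rw [count_eq_countP, countP_map, countP_eq_length_filter]; rfl
    _ = l.tail.count k := by rw [consecutivePairs, map_snd_zip (by simp)]
    _ ≤ l.count k := (tail_sublist l).count_le k

theorem card_filter_exists_infix_pair_left_le {l : List ι} (hl : ∀ x ∈ l, l.count x ≤ 2) :
    (l.toFinset.offDiag.filter fun p : ι × ι =>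
      ∃ k ∈ l, [p.1, k] <:+: l ∧ [p.2, k] <:+: l).card ≤ 2 * l.toFinset.card := by
  set N : ι → Finset ι := fun k => l.toFinset.filter fun a => [a, k] <:+: l
  have hN : ∀ k ∈ l.toFinset, (N k).offDiag.card ≤ 2 := by
    intro k hk
    have h2 : (N k).card ≤ 2 :=
      (card_filter_infix_pair_left_le l _ k).trans (hl k (mem_toFinset.1 hk))
    rw [Finset.offDiag_card]
    have := Nat.mul_le_mul_right (N k).card h2
    omega
  calc _ ≤ (l.toFinset.biUnion fun k => (N k).offDiag).card := by
        refine Finset.card_le_card fun p hp => ?_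
        obtain ⟨hp, k, hk, h1, h2⟩ := Finset.mem_filter.1 hp
        obtain ⟨hp1, hp2, hne⟩ := Finset.mem_offDiag.1 hp
        refine Finset.mem_biUnion.2 ⟨k, mem_toFinset.2 hk, ?_⟩
        exact Finset.mem_offDiag.2
          ⟨Finset.mem_filter.2 ⟨hp1, h1⟩, Finset.mem_filter.2 ⟨hp2, h2⟩, hne⟩
    _ ≤ ∑ k ∈ l.toFinset, (N k).offDiag.card := Finset.card_biUnion_le
    _ ≤ ∑ _k ∈ l.toFinset, 2 := Finset.sum_le_sum hN
    _ = 2 * l.toFinset.card := by rw [Finset.sum_const, smul_eq_mul, mul_comm]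

theorem card_filter_exists_infix_pair_right_le {l : List ι} (hl : ∀ x ∈ l, l.count x ≤ 2) :
    (l.toFinset.offDiag.filter fun p : ι × ι =>
      ∃ k ∈ l, [k, p.1] <:+: l ∧ [k, p.2] <:+: l).card ≤ 2 * l.toFinset.card := by
  simpa only [toFinset_reverse, mem_reverse, pair_infix_reverse_iff] using
    card_filter_exists_infix_pair_left_le (l := l.reverse) (by simpa using hl)

end List

theorem stmt_11_general (α : List ℕ)
    (hcard : 6 < α.toFinset.card)
    (hcount : ∀ x ∈ α, α.count x = 2) :
    ∃ i j : ℕ, i ≠ j ∧ i ∈ α ∧ j ∈ α ∧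
      (∀ k : ℕ, ¬ ([i, k] <:+: α ∧ [j, k] <:+: α) ∧
                ¬ ([k, i] <:+: α ∧ [k, j] <:+: α)) ∧
      ¬ ∃ α₁ α₂ α₃ : List ℕ,
        α = α₁ ++ [i, j] ++ α₂ ++ [j, i] ++ α₃ := by
  classical
  set S := α.toFinset
  have hfew : (S.offDiag.filter fun p : ℕ × ℕ =>
      (∃ k ∈ α, [p.1, k] <:+: α ∧ [p.2, k] <:+: α) ∨
      (∃ k ∈ α, [k, p.1] <:+: α ∧ [k, p.2] <:+: α) ∨
      ([p.1, p.2] <:+: α ∧ [p.2, p.1] <:+: α)).card < S.offDiag.card := by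
    have hle : ∀ x ∈ α, α.count x ≤ 2 := fun x hx => (hcount x hx).le
    calc _ ≤ 2 * S.card + (2 * S.card + (α.length - 1)) := by
          rw [Finset.filter_or, Finset.filter_or]
          refine (Finset.card_union_le _ _).trans (add_le_add
            (List.card_filter_exists_infix_pair_left_le hle) ((Finset.card_union_le _ _).trans
              (add_le_add (List.card_filter_exists_infix_pair_right_le hle) ?_)))
          exact (Finset.card_le_card (Finset.monotone_filter_right _ fun _ _ h => h.1)).trans
            (List.card_filter_infix_pair_le α _)
      _ < S.card * S.card - S.card := by
          have hlen : α.length = 2 * S.card := List.length_eq_two_mul_card_toFinset hcount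
          have := Nat.mul_le_mul_right S.card hcard
          omega
      _ = S.offDiag.card := (Finset.offDiag_card S).symm
  obtain ⟨⟨i, j⟩, hij, hgood⟩ := Finset.exists_mem_notMem_of_card_lt_card hfew
  obtain ⟨hi, hj, hne⟩ := Finset.mem_offDiag.1 hij
  simp only [Finset.mem_filter, hij, true_and, not_or, not_exists, not_and] at hgood
  obtain ⟨hleft, hright, htwoway⟩ := hgood
  refine ⟨i, j, hne, List.mem_toFinset.1 hi, List.mem_toFinset.1 hj,
    fun k => ⟨fun h => hleft k (h.1.subset (by simp)) h.1 h.2,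
      fun h => hright k (h.1.subset (by simp)) h.1 h.2⟩, ?_⟩
  rintro ⟨α₁, α₂, α₃, rfl⟩
  exact htwoway ⟨α₁, α₂ ++ [j, i] ++ α₃, by simp⟩ ⟨α₁ ++ [i, j] ++ α₂, α₃, by simp⟩

/-- Let α ∈ ℕ⁺ have more than 6 distinct variables, each occurring exactly
twice. Then there are distinct variables i, j of α such that (1) no variable
k has both i and j among its left neighbours or both among its right
neighbours, and (2) α cannot be written as α₁·i·j·α₂·j·i·α₃. -/
theorem stmt_11 (α : List ℕ) (hα : α ≠ [])
    (hcard : 6 < α.toFinset.card)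
    (hcount : ∀ x ∈ α, α.count x = 2) :
    ∃ i j : ℕ, i ≠ j ∧ i ∈ α ∧ j ∈ α ∧
      (∀ k : ℕ, ¬ ([i, k] <:+: α ∧ [j, k] <:+: α) ∧
                ¬ ([k, i] <:+: α ∧ [k, j] <:+: α)) ∧
      ¬ ∃ α₁ α₂ α₃ : List ℕ,
        α = α₁ ++ [i, j] ++ α₂ ++ [j, i] ++ α₃ :=
  stmt_11_general α hcard hcount
end

section
/- Let Σ be an alphabet and α ∈ ℕ⁺ a pattern in which every variable occurs at least twice. Let σ : ℕ* → Σ* be a 1-uniform morphism such that every length-2 factor of σ(α) occurs in σ(α) exactly once. Then σ is unambiguous with respect to α: every morphism τ : ℕ* → Σ* with τ(α) = σ(α) satisfies τ(x) = σ(x) for all variables x occurring in α. -/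
/-!
Write `w = σ(α) = τ(α)`. If some variable `y` had `|τ(y)| ≥ 2`, its two occurrences in `α`
would put the length-2 prefix of `τ(y)` at two different positions of `w`. So `|τ(y)| ≤ 1`
for every `y`, and since `|w| = |α|` all these lengths are `1`. Two morphisms that agree in
length on every variable and have the same image of `α` agree on every variable of `α`.
-/

namespace List

variable {α β : Type*}

theorem exists_eq_append_cons_append_cons [DecidableEq α] {l : List α} {x : α}
    (h : 2 ≤ l.count x) : ∃ a b c, l = a ++ x :: b ++ x :: c := by
  obtain ⟨r₁, r₂, rfl, hx₁, hx₂⟩ := cons_sublist_iff.mp (duplicate_iff_sublist.mp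
    (duplicate_iff_two_le_count.mpr h))
  obtain ⟨a, b, rfl⟩ := append_of_mem hx₁
  obtain ⟨c, d, rfl⟩ := append_of_mem (singleton_sublist.mp hx₂)
  exact ⟨a, b ++ c, d, by simp⟩

theorem length_flatMap_le_length {l : List α} {f : α → List β}
    (h : ∀ x ∈ l, (f x).length ≤ 1) : (l.flatMap f).length ≤ l.length := by
  simpa [length_flatMap] using
    sum_le_card_nsmul (l.map fun x => (f x).length) 1 (by simpa using h)

theorem length_flatMap_of_length_eq_one {l : List α} {f : α → List β}
    (h : ∀ x ∈ l, (f x).length = 1) : (l.flatMap f).length = l.length := by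
  rw [length_flatMap, map_congr_left h]
  simp

theorem length_eq_one_of_length_flatMap_eq {l : List α} {f : α → List β}
    (hle : ∀ x ∈ l, (f x).length ≤ 1) (h : (l.flatMap f).length = l.length) :
    ∀ x ∈ l, (f x).length = 1 := by
  induction l with
  | nil => simp
  | cons y t ih =>
    simp only [forall_mem_cons, flatMap_cons, length_append, length_cons] at hle h ⊢
    have ht := length_flatMap_le_length hle.2
    exact ⟨by omega, ih hle.2 (by omega)⟩

theorem eq_of_flatMap_eq_of_length_eq {l : List α} {f g : α → List β}
    (hlen : ∀ x ∈ l, (f x).length = (g x).length) (h : l.flatMap f = l.flatMap g) :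
    ∀ x ∈ l, f x = g x := by
  induction l with
  | nil => simp
  | cons y t ih =>
    simp only [forall_mem_cons, flatMap_cons] at hlen h ⊢
    obtain ⟨hy, ht⟩ := append_inj h hlen.1
    exact ⟨hy, ih hlen.2 ht⟩

end List

def HasDistinctTwoFactors {S : Type*} (w : List S) : Prop :=
  ∀ p q : ℕ, p + 2 ≤ w.length → q + 2 ≤ w.length → (w.drop p).take 2 = (w.drop q).take 2 → p = q

theorem HasDistinctTwoFactors.length_le_one {S : Type*} {w p u m s : List S}
    (hw : HasDistinctTwoFactors w) (h : w = p ++ u ++ m ++ u ++ s) : u.length ≤ 1 := by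
  by_contra! hu
  have hlen : w.length = p.length + u.length + m.length + u.length + s.length := by
    simp only [h, List.length_append]
  have hfirst : w.drop p.length = u ++ (m ++ u ++ s) := by
    rw [h]; simp
  have hsecond : w.drop (p.length + u.length + m.length) = u ++ s := by
    rw [h]; simp [Nat.add_assoc]
  have hpos := hw p.length (p.length + u.length + m.length) (by omega) (by omega) (by
    rw [hfirst, hsecond, List.take_append_of_le_length hu, List.take_append_of_le_length hu])
  omega

theorem stmt_13_general (S : Type*) (α : List ℕ)
    (hcount : ∀ x ∈ α, 2 ≤ α.count x)
    (σ : ℕ → List S) (h1 : ∀ x, (σ x).length = 1)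
    (hfac : ∀ p q : ℕ, p + 2 ≤ (α.flatMap σ).length →
      q + 2 ≤ (α.flatMap σ).length →
      ((α.flatMap σ).drop p).take 2 = ((α.flatMap σ).drop q).take 2 →
      p = q) :
    ∀ τ : ℕ → List S,
      α.flatMap τ = α.flatMap σ → ∀ x ∈ α, τ x = σ x := by
  intro τ heq
  have hle : ∀ y ∈ α, (τ y).length ≤ 1 := by
    intro y hy
    obtain ⟨a, b, c, hα⟩ := List.exists_eq_append_cons_append_cons (hcount y hy)
    have hw : α.flatMap σ = a.flatMap τ ++ τ y ++ b.flatMap τ ++ τ y ++ c.flatMap τ := by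
      rw [← heq, hα]
      simp
    exact HasDistinctTwoFactors.length_le_one hfac hw
  have hlen : (α.flatMap τ).length = α.length := by
    rw [heq, List.length_flatMap_of_length_eq_one fun x _ => h1 x]
  have hτ := List.length_eq_one_of_length_flatMap_eq hle hlen
  exact List.eq_of_flatMap_eq_of_length_eq (fun x hx => by rw [hτ x hx, h1]) heq

/-- Let α ∈ ℕ⁺ be a pattern in which every variable occurs at least twice,
and let σ : ℕ* → Σ* be a 1-uniform morphism such that every length-2 factor
of σ(α) occurs in σ(α) exactly once (all length-2 factors at distinct
positions are distinct). Then σ is unambiguous with respect to α. -/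
theorem stmt_13 (S : Type*) (α : List ℕ) (hα : α ≠ [])
    (hcount : ∀ x ∈ α, 2 ≤ α.count x)
    (σ : ℕ → List S) (h1 : ∀ x, (σ x).length = 1)
    (hfac : ∀ p q : ℕ, p + 2 ≤ (α.flatMap σ).length →
      q + 2 ≤ (α.flatMap σ).length →
      ((α.flatMap σ).drop p).take 2 = ((α.flatMap σ).drop q).take 2 →
      p = q) :
    ∀ τ : ℕ → List S,
      α.flatMap τ = α.flatMap σ → ∀ x ∈ α, τ x = σ x :=
  stmt_13_general S α hcount σ h1 hfac
end

section
/- Let Σ be an alphabet and α ∈ ℕ⁺ a pattern in which every variable occurs at least twice. If there exists a 1-uniform morphism σ : ℕ* → Σ* such that every length-2 factor of σ(α) occurs exactly once in σ(α), then α is not a fixed point of a nontrivial morphism. -/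
/-!
A 1-uniform morphism acts letterwise, so `α` itself has pairwise distinct length-2 factors.
If `φ(α) = α`, every variable `y` occurs twice in `α`, hence `φ(y)` occurs twice in `α` at
different positions, which forces `|φ(y)| ≤ 1`. Since `|φ(α)| = |α|`, all images have length
exactly one, and comparing `φ(α) = α` letter by letter gives `φ(y) = y`.
-/

def UniqueBigrams {β : Type*} (w : List β) : Prop :=
  ∀ p q, p + 2 ≤ w.length → q + 2 ≤ w.length → (w.drop p).take 2 = (w.drop q).take 2 → p = q

theorem UniqueBigrams.of_map {β γ : Type*} {f : β → γ} {l : List β}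
    (h : UniqueBigrams (l.map f)) : UniqueBigrams l := fun p q hp hq hpq =>
  h p q (by simpa using hp) (by simpa using hq)
    (by rw [← List.map_drop, ← List.map_take, hpq]; simp)

theorem UniqueBigrams.length_le_one {β : Type*} {u₁ v u₂ u₃ : List β}
    (h : UniqueBigrams (u₁ ++ v ++ u₂ ++ v ++ u₃)) : v.length ≤ 1 := by
  by_contra! hv
  have htake : ∀ w : List β, (v ++ w).take 2 = v.take 2 := fun w => by
    simp [List.take_append, show 2 - v.length = 0 by omega]
  have hp : ((u₁ ++ v ++ u₂ ++ v ++ u₃).drop u₁.length).take 2 = v.take 2 := by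
    rw [show u₁ ++ v ++ u₂ ++ v ++ u₃ = u₁ ++ (v ++ (u₂ ++ v ++ u₃)) by simp, List.drop_left,
      htake]
  have hq : ((u₁ ++ v ++ u₂ ++ v ++ u₃).drop (u₁ ++ v ++ u₂).length).take 2 = v.take 2 := by
    rw [show u₁ ++ v ++ u₂ ++ v ++ u₃ = (u₁ ++ v ++ u₂) ++ (v ++ u₃) by simp, List.drop_left,
      htake]
  have := h _ _ (by simp; omega) (by simp; omega) (hp.trans hq.symm)
  simp only [List.length_append] at this
  omega

theorem List.exists_eq_append_cons_append_cons_s14 {β : Type*} [DecidableEq β] {l : List β} {y : β}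
    (h : 2 ≤ l.count y) : ∃ u₁ u₂ u₃, l = u₁ ++ y :: u₂ ++ y :: u₃ := by
  obtain ⟨r₁, r₂, rfl, hy₁, hy₂⟩ := List.cons_sublist_iff.1 <|
    List.duplicate_iff_sublist.1 (List.duplicate_iff_two_le_count.2 h)
  obtain ⟨s₁, t₁, rfl⟩ := List.append_of_mem hy₁
  obtain ⟨s₂, t₂, rfl⟩ := List.append_of_mem (List.singleton_sublist.1 hy₂)
  exact ⟨s₁, t₁ ++ s₂, t₂, by simp⟩

theorem List.length_flatMap_le_length_s14 {β γ : Type*} {l : List β} {φ : β → List γ}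
    (h : ∀ y ∈ l, (φ y).length ≤ 1) : (l.flatMap φ).length ≤ l.length := by
  simpa [List.length_flatMap] using
    List.sum_le_card_nsmul (l.map fun y => (φ y).length) 1 (by simpa using h)

theorem List.length_eq_one_of_length_flatMap_eq_s14 {β γ : Type*} {l : List β} {φ : β → List γ}
    (h : ∀ y ∈ l, (φ y).length ≤ 1) (hlen : (l.flatMap φ).length = l.length) :
    ∀ y ∈ l, (φ y).length = 1 := by
  induction l with
  | nil => simp
  | cons a t ih =>
    have ht : ∀ y ∈ t, (φ y).length ≤ 1 := fun y hy => h y (List.mem_cons_of_mem a hy)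
    have ha := h a List.mem_cons_self
    have htle := List.length_flatMap_le_length_s14 ht
    simp only [List.flatMap_cons, List.length_append, List.length_cons] at hlen
    rintro y (_ | ⟨_, hy⟩)
    · omega
    · exact ih ht (by omega) y hy

theorem List.eq_singleton_of_flatMap_eq_self {β : Type*} {l : List β} {φ : β → List β}
    (h : ∀ y ∈ l, (φ y).length = 1) (hfix : l.flatMap φ = l) : ∀ y ∈ l, φ y = [y] := by
  induction l with
  | nil => simp
  | cons a t ih =>
    obtain ⟨b, hb⟩ := List.length_eq_one_iff.1 (h a List.mem_cons_self)
    rw [List.flatMap_cons, hb, List.singleton_append, List.cons.injEq] at hfix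
    rintro y (_ | ⟨_, hy⟩)
    · rw [hb, hfix.1]
    · exact ih (fun z hz => h z (List.mem_cons_of_mem a hz)) hfix.2 y hy

theorem stmt_14_general (S : Type*) (α : List ℕ)
    (hcount : ∀ x ∈ α, 2 ≤ α.count x)
    (hex : ∃ σ : ℕ → List S, (∀ x, (σ x).length = 1) ∧
      ∀ p q : ℕ, p + 2 ≤ (α.flatMap σ).length →
        q + 2 ≤ (α.flatMap σ).length →
        ((α.flatMap σ).drop p).take 2 = ((α.flatMap σ).drop q).take 2 →
        p = q) :
    ¬ ∃ φ : ℕ → List ℕ, α.flatMap φ = α ∧ ∃ x ∈ α, φ x ≠ [x] := by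
  obtain ⟨σ, hσ, hbigrams⟩ := hex
  choose f hf using fun x => List.length_eq_one_iff.1 (hσ x)
  have huniq : UniqueBigrams α := by
    refine UniqueBigrams.of_map (f := f) ?_
    rwa [List.map_eq_flatMap, ← funext hf]
  rintro ⟨φ, hfix, x, hx, hne⟩
  have hle : ∀ y ∈ α, (φ y).length ≤ 1 := fun y hy => by
    obtain ⟨u₁, u₂, u₃, hα⟩ := List.exists_eq_append_cons_append_cons_s14 (hcount y hy)
    apply UniqueBigrams.length_le_one (u₁ := u₁.flatMap φ) (u₂ := u₂.flatMap φ)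
      (u₃ := u₃.flatMap φ)
    convert huniq using 1
    rw [← hfix, hα]
    simp
  have hone := List.length_eq_one_of_length_flatMap_eq_s14 hle (by rw [hfix])
  exact hne (List.eq_singleton_of_flatMap_eq_self hone hfix x hx)

/-- Let α ∈ ℕ⁺ be a pattern in which every variable occurs at least twice.
If there exists a 1-uniform morphism σ : ℕ* → Σ* such that every length-2
factor of σ(α) occurs exactly once in σ(α), then α is not a fixed point of
a nontrivial morphism. -/
theorem stmt_14 (S : Type*) (α : List ℕ) (hα : α ≠ [])
    (hcount : ∀ x ∈ α, 2 ≤ α.count x)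
    (hex : ∃ σ : ℕ → List S, (∀ x, (σ x).length = 1) ∧
      ∀ p q : ℕ, p + 2 ≤ (α.flatMap σ).length →
        q + 2 ≤ (α.flatMap σ).length →
        ((α.flatMap σ).drop p).take 2 = ((α.flatMap σ).drop q).take 2 →
        p = q) :
    ¬ ∃ φ : ℕ → List ℕ, α.flatMap φ = α ∧ ∃ x ∈ α, φ x ≠ [x] :=
  stmt_14_general S α hcount hex
end
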